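/- Let K₁₁, K₁₂ be real m₁×n₁ and m₁×n₂ matrices and K₂₁, K₂₂ be real m₂×n₁ and m₂×n₂ matrices; let K denote the 2×2 block matrix with blocks K₁₁, K₁₂, K₂₁, K₂₂. Let U₁ (m₁×s₁) and U₂ (m₂×s₂) have orthonormal columns, let D = diag(U₁, U₂), let ε ≥ 0, and for b ∈ {1,2} let R_b be an (s₁+s₂)×r_b matrix with orthonormal columns satisfying ‖E_b − R_b·R_bᵀ·E_b‖_F ≤ ε·‖E_b‖_F, where E_b = [U₁ᵀ·K₁b ; U₂ᵀ·K₂b] is the vertical stack, and set U'_b = D·R_b. Then ‖[K₁₁;K₂₁] − U'₁·U'₁ᵀ·[K₁₁;K₂₁]‖_F² + ‖[K₁₂;K₂₂] − U'₂·U'₂ᵀ·[K₁₂;K₂₂]‖_F² ≤ ‖[K₁₁ K₁₂] − U₁·U₁ᵀ·[K₁₁ K₁₂]‖_F² + ‖[K₂₁ K₂₂] − U₂·U₂ᵀ·[K₂₁ K₂₂]‖_F² + ε²·‖K‖_F². (This is the assembled per-node inequality in the proof of Theorem 5.1: the squared approximation error of the two sibling blocks at level l is bounded by the error of the two children blocks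 at level l+1 plus ε²‖K‖_F².) -/

import Mathlib

open Matrix

/-- Frobenius norm of a real matrix. -/
noncomputable def frobNorm {α β : Type*} [Fintype α] [Fintype β] (A : Matrix α β ℝ) : ℝ :=
  Real.sqrt (∑ i, ∑ j, A i j ^ 2)

/-!
With `D = diag(U₁, U₂)` and `A_b = [K₁b; K₂b]`, the projection `D Dᵀ` acts blockwise, so
`∑_b ‖A_b - D Dᵀ A_b‖²` is exactly the children's error on the right-hand side. Since `D R_b`
has orthonormal columns, Pythagoras splits the parent's error into
`‖A_b - D Dᵀ A_b‖² + ‖E_b - R_b R_bᵀ E_b‖²` with `E_b = Dᵀ A_b`, and the second term is at most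
`ε² ‖E_b‖² ≤ ε² ‖A_b‖²`; finally `‖A₁‖² + ‖A₂‖² = ‖K‖²`.
-/

section FrobNorm

variable {α β γ : Type*} [Fintype α] [Fintype β] [Fintype γ]

lemma frobNorm_nonneg (A : Matrix α β ℝ) : 0 ≤ frobNorm A :=
  Real.sqrt_nonneg _

lemma frobNorm_sq (A : Matrix α β ℝ) : frobNorm A ^ 2 = ∑ i, ∑ j, A i j ^ 2 :=
  Real.sq_sqrt (Finset.sum_nonneg fun _ _ => Finset.sum_nonneg fun _ _ => sq_nonneg _)

lemma frobNorm_sq_eq_trace (A : Matrix α β ℝ) : frobNorm A ^ 2 = (Aᵀ * A).trace := by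
  rw [frobNorm_sq]
  simp only [trace, diag, mul_apply, transpose_apply, sq]
  exact Finset.sum_comm

lemma frobNorm_fromRows_sq {α' : Type*} [Fintype α'] (A : Matrix α β ℝ) (B : Matrix α' β ℝ) :
    frobNorm (fromRows A B) ^ 2 = frobNorm A ^ 2 + frobNorm B ^ 2 := by
  simp [frobNorm_sq, Fintype.sum_sum_type]

lemma frobNorm_fromCols_sq {β' : Type*} [Fintype β'] (A : Matrix α β ℝ) (B : Matrix α β' ℝ) :
    frobNorm (fromCols A B) ^ 2 = frobNorm A ^ 2 + frobNorm B ^ 2 := by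
  simp [frobNorm_sq, Fintype.sum_sum_type, Finset.sum_add_distrib]

lemma frobNorm_sub_proj_sq [DecidableEq γ] {D : Matrix α γ ℝ} (hD : Dᵀ * D = 1)
    (A : Matrix α β ℝ) :
    frobNorm (A - D * (Dᵀ * A)) ^ 2 = frobNorm A ^ 2 - frobNorm (Dᵀ * A) ^ 2 := by
  set E := Dᵀ * A
  have hDE : (D * E)ᵀ * (D * E) = Eᵀ * E := by
    rw [transpose_mul, Matrix.mul_assoc, ← Matrix.mul_assoc Dᵀ, hD, Matrix.one_mul]
  have hDEA : (D * E)ᵀ * A = Eᵀ * E := by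
    rw [transpose_mul, Matrix.mul_assoc]
  have hADE : (Aᵀ * (D * E)).trace = (Eᵀ * E).trace := by
    rw [← trace_transpose, transpose_mul, transpose_transpose, hDEA]
  rw [frobNorm_sq_eq_trace, frobNorm_sq_eq_trace, frobNorm_sq_eq_trace, transpose_sub,
    Matrix.sub_mul, Matrix.mul_sub, Matrix.mul_sub, trace_sub, trace_sub, trace_sub, hDE, hDEA,
    hADE]
  ring

lemma frobNorm_transpose_mul_sq_le [DecidableEq γ] {D : Matrix α γ ℝ} (hD : Dᵀ * D = 1)
    (A : Matrix α β ℝ) : frobNorm (Dᵀ * A) ^ 2 ≤ frobNorm A ^ 2 := by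
  have := frobNorm_sub_proj_sq hD A
  nlinarith [frobNorm_nonneg (A - D * (Dᵀ * A))]

lemma transpose_mul_self_mul_eq_one {δ : Type*} [DecidableEq γ] [DecidableEq δ]
    {D : Matrix α γ ℝ} {R : Matrix γ δ ℝ} (hD : Dᵀ * D = 1) (hR : Rᵀ * R = 1) :
    (D * R)ᵀ * (D * R) = 1 := by
  rw [transpose_mul, Matrix.mul_assoc, ← Matrix.mul_assoc Dᵀ, hD, Matrix.one_mul, hR]

lemma frobNorm_sub_proj_mul_sq_le {δ : Type*} [Fintype δ] [DecidableEq γ] [DecidableEq δ]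
    {D : Matrix α γ ℝ} {R : Matrix γ δ ℝ} (hD : Dᵀ * D = 1) (hR : Rᵀ * R = 1)
    (A : Matrix α β ℝ) {ε : ℝ}
    (hE : frobNorm (Dᵀ * A - R * (Rᵀ * (Dᵀ * A))) ≤ ε * frobNorm (Dᵀ * A)) :
    frobNorm (A - (D * R) * ((D * R)ᵀ * A)) ^ 2 ≤
      frobNorm (A - D * (Dᵀ * A)) ^ 2 + ε ^ 2 * frobNorm A ^ 2 := by
  have hsplit : frobNorm (A - (D * R) * ((D * R)ᵀ * A)) ^ 2 =
      frobNorm (A - D * (Dᵀ * A)) ^ 2 + frobNorm (Dᵀ * A - R * (Rᵀ * (Dᵀ * A))) ^ 2 := by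
    rw [frobNorm_sub_proj_sq (transpose_mul_self_mul_eq_one hD hR), frobNorm_sub_proj_sq hD,
      frobNorm_sub_proj_sq hR, transpose_mul, Matrix.mul_assoc]
    ring
  have hE_sq : frobNorm (Dᵀ * A - R * (Rᵀ * (Dᵀ * A))) ^ 2 ≤ ε ^ 2 * frobNorm (Dᵀ * A) ^ 2 := by
    rw [← mul_pow]
    exact pow_le_pow_left₀ (frobNorm_nonneg _) hE 2
  have hDA := mul_le_mul_of_nonneg_left (frobNorm_transpose_mul_sq_le hD A) (sq_nonneg ε)
  linarith

end FrobNorm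

section Blocks

variable {m₁ m₂ s₁ s₂ n n₁ n₂ : Type*} [Fintype m₁] [Fintype m₂]

lemma fromBlocks_transpose_mul_self_eq_one [DecidableEq s₁] [DecidableEq s₂]
    {U₁ : Matrix m₁ s₁ ℝ} {U₂ : Matrix m₂ s₂ ℝ} (hU₁ : U₁ᵀ * U₁ = 1) (hU₂ : U₂ᵀ * U₂ = 1) :
    (fromBlocks U₁ 0 0 U₂)ᵀ * fromBlocks U₁ 0 0 U₂ = 1 := by
  simp [fromBlocks_transpose, fromBlocks_multiply, hU₁, hU₂, fromBlocks_one]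

lemma fromBlocks_transpose_mul_fromRows (U₁ : Matrix m₁ s₁ ℝ) (U₂ : Matrix m₂ s₂ ℝ)
    (A : Matrix m₁ n ℝ) (B : Matrix m₂ n ℝ) :
    (fromBlocks U₁ 0 0 U₂)ᵀ * fromRows A B = fromRows (U₁ᵀ * A) (U₂ᵀ * B) := by
  simp [fromBlocks_transpose, fromBlocks_mul_fromRows]

lemma frobNorm_fromRows_sub_fromBlocks_proj_sq [Fintype s₁] [Fintype s₂] [Fintype n]
    (U₁ : Matrix m₁ s₁ ℝ) (U₂ : Matrix m₂ s₂ ℝ) (A : Matrix m₁ n ℝ) (B : Matrix m₂ n ℝ) :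
    frobNorm (fromRows A B - fromBlocks U₁ 0 0 U₂ * ((fromBlocks U₁ 0 0 U₂)ᵀ * fromRows A B)) ^ 2
      = frobNorm (A - U₁ * (U₁ᵀ * A)) ^ 2 + frobNorm (B - U₂ * (U₂ᵀ * B)) ^ 2 := by
  rw [← frobNorm_fromRows_sq, fromBlocks_transpose_mul_fromRows, fromBlocks_mul_fromRows]
  congr 2
  ext (i | i) j <;> simp

lemma frobNorm_fromCols_sub_proj_sq [Fintype s₁] [Fintype n₁] [Fintype n₂]
    (U : Matrix m₁ s₁ ℝ) (A : Matrix m₁ n₁ ℝ) (B : Matrix m₁ n₂ ℝ) :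
    frobNorm (fromCols A B - U * (Uᵀ * fromCols A B)) ^ 2
      = frobNorm (A - U * (Uᵀ * A)) ^ 2 + frobNorm (B - U * (Uᵀ * B)) ^ 2 := by
  rw [← frobNorm_fromCols_sq, mul_fromCols, mul_fromCols]
  congr 2
  ext i (j | j) <;> simp

end Blocks

theorem per_node_inequality_general {m₁ m₂ s₁ s₂ n₁ n₂ r₁ r₂ : ℕ}
    (K₁₁ : Matrix (Fin m₁) (Fin n₁) ℝ) (K₁₂ : Matrix (Fin m₁) (Fin n₂) ℝ)
    (K₂₁ : Matrix (Fin m₂) (Fin n₁) ℝ) (K₂₂ : Matrix (Fin m₂) (Fin n₂) ℝ)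
    (U₁ : Matrix (Fin m₁) (Fin s₁) ℝ) (U₂ : Matrix (Fin m₂) (Fin s₂) ℝ)
    (hU₁ : U₁ᵀ * U₁ = 1) (hU₂ : U₂ᵀ * U₂ = 1)
    (ε : ℝ)
    (R₁ : Matrix (Fin s₁ ⊕ Fin s₂) (Fin r₁) ℝ)
    (R₂ : Matrix (Fin s₁ ⊕ Fin s₂) (Fin r₂) ℝ)
    (hR₁ : R₁ᵀ * R₁ = 1) (hR₂ : R₂ᵀ * R₂ = 1)
    (hE₁ : frobNorm (Matrix.fromRows (U₁ᵀ * K₁₁) (U₂ᵀ * K₂₁) -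
        R₁ * (R₁ᵀ * Matrix.fromRows (U₁ᵀ * K₁₁) (U₂ᵀ * K₂₁))) ≤
      ε * frobNorm (Matrix.fromRows (U₁ᵀ * K₁₁) (U₂ᵀ * K₂₁)))
    (hE₂ : frobNorm (Matrix.fromRows (U₁ᵀ * K₁₂) (U₂ᵀ * K₂₂) -
        R₂ * (R₂ᵀ * Matrix.fromRows (U₁ᵀ * K₁₂) (U₂ᵀ * K₂₂))) ≤
      ε * frobNorm (Matrix.fromRows (U₁ᵀ * K₁₂) (U₂ᵀ * K₂₂))) :
    frobNorm (Matrix.fromRows K₁₁ K₂₁ -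
        (Matrix.fromBlocks U₁ 0 0 U₂ * R₁) *
          ((Matrix.fromBlocks U₁ 0 0 U₂ * R₁)ᵀ * Matrix.fromRows K₁₁ K₂₁)) ^ 2 +
      frobNorm (Matrix.fromRows K₁₂ K₂₂ -
        (Matrix.fromBlocks U₁ 0 0 U₂ * R₂) *
          ((Matrix.fromBlocks U₁ 0 0 U₂ * R₂)ᵀ * Matrix.fromRows K₁₂ K₂₂)) ^ 2 ≤
    frobNorm (Matrix.fromCols K₁₁ K₁₂ -
        U₁ * (U₁ᵀ * Matrix.fromCols K₁₁ K₁₂)) ^ 2 +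
      frobNorm (Matrix.fromCols K₂₁ K₂₂ -
        U₂ * (U₂ᵀ * Matrix.fromCols K₂₁ K₂₂)) ^ 2 +
      ε ^ 2 * frobNorm (Matrix.fromBlocks K₁₁ K₁₂ K₂₁ K₂₂) ^ 2 := by
  have hD := fromBlocks_transpose_mul_self_eq_one hU₁ hU₂
  have h₁ := frobNorm_sub_proj_mul_sq_le hD hR₁ (fromRows K₁₁ K₂₁)
    (by rwa [fromBlocks_transpose_mul_fromRows])
  have h₂ := frobNorm_sub_proj_mul_sq_le hD hR₂ (fromRows K₁₂ K₂₂)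
    (by rwa [fromBlocks_transpose_mul_fromRows])
  rw [frobNorm_fromRows_sub_fromBlocks_proj_sq] at h₁ h₂
  have hK : frobNorm (fromBlocks K₁₁ K₁₂ K₂₁ K₂₂) ^ 2 =
      frobNorm (fromRows K₁₁ K₂₁) ^ 2 + frobNorm (fromRows K₁₂ K₂₂) ^ 2 := by
    rw [← fromCols_fromRows_eq_fromBlocks, frobNorm_fromCols_sq]
  rw [frobNorm_fromCols_sub_proj_sq, frobNorm_fromCols_sub_proj_sq, hK]
  linarith

theorem per_node_inequality {m₁ m₂ s₁ s₂ n₁ n₂ r₁ r₂ : ℕ}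
    (K₁₁ : Matrix (Fin m₁) (Fin n₁) ℝ) (K₁₂ : Matrix (Fin m₁) (Fin n₂) ℝ)
    (K₂₁ : Matrix (Fin m₂) (Fin n₁) ℝ) (K₂₂ : Matrix (Fin m₂) (Fin n₂) ℝ)
    (U₁ : Matrix (Fin m₁) (Fin s₁) ℝ) (U₂ : Matrix (Fin m₂) (Fin s₂) ℝ)
    (hU₁ : U₁ᵀ * U₁ = 1) (hU₂ : U₂ᵀ * U₂ = 1)
    (ε : ℝ) (hε : 0 ≤ ε)
    (R₁ : Matrix (Fin s₁ ⊕ Fin s₂) (Fin r₁) ℝ)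
    (R₂ : Matrix (Fin s₁ ⊕ Fin s₂) (Fin r₂) ℝ)
    (hR₁ : R₁ᵀ * R₁ = 1) (hR₂ : R₂ᵀ * R₂ = 1)
    (hE₁ : frobNorm (Matrix.fromRows (U₁ᵀ * K₁₁) (U₂ᵀ * K₂₁) -
        R₁ * (R₁ᵀ * Matrix.fromRows (U₁ᵀ * K₁₁) (U₂ᵀ * K₂₁))) ≤
      ε * frobNorm (Matrix.fromRows (U₁ᵀ * K₁₁) (U₂ᵀ * K₂₁)))
    (hE₂ : frobNorm (Matrix.fromRows (U₁ᵀ * K₁₂) (U₂ᵀ * K₂₂) -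
        R₂ * (R₂ᵀ * Matrix.fromRows (U₁ᵀ * K₁₂) (U₂ᵀ * K₂₂))) ≤
      ε * frobNorm (Matrix.fromRows (U₁ᵀ * K₁₂) (U₂ᵀ * K₂₂))) :
    frobNorm (Matrix.fromRows K₁₁ K₂₁ -
        (Matrix.fromBlocks U₁ 0 0 U₂ * R₁) *
          ((Matrix.fromBlocks U₁ 0 0 U₂ * R₁)ᵀ * Matrix.fromRows K₁₁ K₂₁)) ^ 2 +
      frobNorm (Matrix.fromRows K₁₂ K₂₂ -
        (Matrix.fromBlocks U₁ 0 0 U₂ * R₂) *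
          ((Matrix.fromBlocks U₁ 0 0 U₂ * R₂)ᵀ * Matrix.fromRows K₁₂ K₂₂)) ^ 2 ≤
    frobNorm (Matrix.fromCols K₁₁ K₁₂ -
        U₁ * (U₁ᵀ * Matrix.fromCols K₁₁ K₁₂)) ^ 2 +
      frobNorm (Matrix.fromCols K₂₁ K₂₂ -
        U₂ * (U₂ᵀ * Matrix.fromCols K₂₁ K₂₂)) ^ 2 +
      ε ^ 2 * frobNorm (Matrix.fromBlocks K₁₁ K₁₂ K₂₁ K₂₂) ^ 2 :=
  per_node_inequality_general K₁₁ K₁₂ K₂₁ K₂₂ U₁ U₂ hU₁ hU₂ ε R₁ R₂ hR₁ hR₂ hE₁ hE₂
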